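/- For all graphs A and B, the graph A ⊗ B is provable in GS if and only if A is provable in GS and B is provable in GS. -/

import Mathlib

/-!
Every rule of GS has a nonempty conclusion whose complement is connected (for p↓ because a
prime graph on at least three vertices is connected). Hence, whenever a derivation step
produces a graph that is the join of its parts on `S` and on `Sᶜ`, the rewritten module lies
entirely on one side, and undoing the step on that side gives a join split of the previous
graph with the same factors up to that step. By induction on derivations, both factors of a
provable join are provable. Conversely, a proof of `B` runs inside the context `A ⊗ [·]`.
-/

namespace GSP

/-- Atoms: a propositional variable (coded by a natural number) with a polarity. -/
abbrev Atom := ℕ × Bool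

/-- The dual atom. -/
def dualAtom (a : Atom) : Atom := (a.1, !a.2)

/-- A finite, simple, undirected graph whose vertices are labelled by atoms. -/
structure LGraph where
  V : Type
  [fintype : Fintype V]
  adj : V → V → Prop
  symm : ∀ {v w : V}, adj v w → adj w v
  irrefl : ∀ v : V, ¬ adj v v
  label : V → Atom

attribute [instance] LGraph.fintype

namespace LGraph

/-- An isomorphism of labelled graphs: a vertex bijection preserving labels and
preserving and reflecting edges. -/
structure Iso (G H : LGraph) where
  toEquiv : G.V ≃ H.V
  adj_iff : ∀ v w : G.V, G.adj v w ↔ H.adj (toEquiv v) (toEquiv w)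
  label_eq : ∀ v : G.V, H.label (toEquiv v) = G.label v

/-- `G ≅ H` : the graphs `G` and `H` are isomorphic. -/
def iso (G H : LGraph) : Prop := Nonempty (Iso G H)

/-- The empty graph. -/
def empty : LGraph where
  V := Empty
  adj _ _ := False
  symm h := h.elim
  irrefl v := v.elim
  label v := v.elim

/-- The single-vertex graph labelled by the atom `a`. -/
def single (a : Atom) : LGraph where
  V := Unit
  adj _ _ := False
  symm h := h.elim
  irrefl _ h := h
  label _ := a

def parAdj (G H : LGraph) : G.V ⊕ H.V → G.V ⊕ H.V → Prop
  | .inl a, .inl b => G.adj a b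
  | .inr a, .inr b => H.adj a b
  | _, _ => False

/-- The par `G ⅋ H` : disjoint union of `G` and `H`. -/
def par (G H : LGraph) : LGraph where
  V := G.V ⊕ H.V
  adj := parAdj G H
  symm := by
    rintro (a | a) (b | b) h
    · exact G.symm h
    · exact h.elim
    · exact h.elim
    · exact H.symm h
  irrefl := by
    rintro (a | a) h
    · exact G.irrefl a h
    · exact H.irrefl a h
  label := Sum.elim G.label H.label

def tensorAdj (G H : LGraph) : G.V ⊕ H.V → G.V ⊕ H.V → Prop
  | .inl a, .inl b => G.adj a b
  | .inr a, .inr b => H.adj a b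
  | .inl _, .inr _ => True
  | .inr _, .inl _ => True

/-- The tensor `G ⊗ H` : join of `G` and `H` (disjoint union plus all edges in between). -/
def tensor (G H : LGraph) : LGraph where
  V := G.V ⊕ H.V
  adj := tensorAdj G H
  symm := by
    rintro (a | a) (b | b) h
    · exact G.symm h
    · exact trivial
    · exact trivial
    · exact H.symm h
  irrefl := by
    rintro (a | a) h
    · exact G.irrefl a h
    · exact H.irrefl a h
  label := Sum.elim G.label H.label

/-- The dual graph `Ḡ` : same vertices, complemented edges, dualized labels. -/
def dual (G : LGraph) : LGraph where
  V := G.V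
  adj v w := v ≠ w ∧ ¬ G.adj v w
  symm h := ⟨fun e => h.1 e.symm, fun h' => h.2 (G.symm h')⟩
  irrefl _ h := h.1 rfl
  label v := dualAtom (G.label v)

def plugAdj (C : LGraph) (R : Set C.V) (X : LGraph) : C.V ⊕ X.V → C.V ⊕ X.V → Prop
  | .inl a, .inl b => C.adj a b
  | .inr a, .inr b => X.adj a b
  | .inl a, .inr _ => a ∈ R
  | .inr _, .inl b => b ∈ R

/-- `C[X]_R` : the graph obtained from the context `C[·]_R` by inserting the graph `X`
as a module whose vertices are adjacent exactly to the vertices in `R`. -/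
def plug (C : LGraph) (R : Set C.V) (X : LGraph) : LGraph where
  V := C.V ⊕ X.V
  adj := plugAdj C R X
  symm := by
    rintro (a | a) (b | b) h
    · exact C.symm h
    · exact h
    · exact h
    · exact X.symm h
  irrefl := by
    rintro (a | a) h
    · exact C.irrefl a h
    · exact X.irrefl a h
  label := Sum.elim C.label X.label

def compAdj (G : LGraph) (H : G.V → LGraph) :
    (Σ v : G.V, (H v).V) → (Σ v : G.V, (H v).V) → Prop := fun x y =>
  (∃ (v : G.V) (a b : (H v).V), x = ⟨v, a⟩ ∧ y = ⟨v, b⟩ ∧ (H v).adj a b) ∨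
    (x.1 ≠ y.1 ∧ G.adj x.1 y.1)

/-- The composition `G⟨H v₁, …, H vₙ⟩` of the family `H` via the graph `G`:
replace each vertex `v` of `G` by the graph `H v`. -/
def comp (G : LGraph) (H : G.V → LGraph) : LGraph where
  V := Σ v : G.V, (H v).V
  adj := compAdj G H
  symm := by
    rintro x y (⟨v, a, b, hx, hy, hab⟩ | ⟨hne, hadj⟩)
    · exact Or.inl ⟨v, b, a, hy, hx, (H v).symm hab⟩
    · exact Or.inr ⟨hne.symm, G.symm hadj⟩
  irrefl := by
    rintro ⟨v, a⟩ (⟨w, x, y, hx, hy, hxy⟩ | ⟨hne, _⟩)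
    · have h := hx.symm.trans hy
      obtain rfl : x = y := by simpa using h
      exact (H w).irrefl x hxy
    · exact hne rfl
  label x := (H x.1).label x.2

/-- A module of `G` : a set `M` of vertices such that every vertex outside `M`
is adjacent either to all vertices of `M` or to none of them. -/
def IsModule (G : LGraph) (M : Set G.V) : Prop :=
  ∀ v ∉ M, ∀ x ∈ M, ∀ y ∈ M, (G.adj v x ↔ G.adj v y)

/-- A prime graph: at least 2 vertices and only trivial modules. -/
def Prime (G : LGraph) : Prop :=
  2 ≤ Fintype.card G.V ∧
    ∀ M : Set G.V, G.IsModule M → M = ∅ ∨ (∃ v, M = {v}) ∨ M = Set.univ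

/-- `G` is `P₄`-free: no four distinct vertices induce a path on 4 vertices. -/
def P4Free (G : LGraph) : Prop :=
  ¬ ∃ v₁ v₂ v₃ v₄ : G.V,
      v₁ ≠ v₂ ∧ v₁ ≠ v₃ ∧ v₁ ≠ v₄ ∧ v₂ ≠ v₃ ∧ v₂ ≠ v₄ ∧ v₃ ≠ v₄ ∧
      G.adj v₁ v₂ ∧ G.adj v₂ v₃ ∧ G.adj v₃ v₄ ∧
      ¬ G.adj v₁ v₃ ∧ ¬ G.adj v₁ v₄ ∧ ¬ G.adj v₂ v₄

end LGraph

open LGraph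

/-- The `n`-fold tensor `X₁ ⊗ ⋯ ⊗ Xₙ`. -/
def bigTensor : (n : ℕ) → (Fin n → LGraph) → LGraph
  | 0, _ => LGraph.empty
  | n + 1, F => (F 0).tensor (bigTensor n fun i => F i.succ)

/-- The `n`-fold par `X₁ ⅋ ⋯ ⅋ Xₙ`. -/
def bigPar : (n : ℕ) → (Fin n → LGraph) → LGraph
  | 0, _ => LGraph.empty
  | n + 1, F => (F 0).par (bigPar n fun i => F i.succ)

/-- The inference rules of system GS (premise, conclusion). -/
inductive GSRule : LGraph → LGraph → Prop
  /-- ai↓ : premise `∅`, conclusion `ā ⅋ a`. -/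
  | ai (a : Atom) : GSRule LGraph.empty ((single (dualAtom a)).par (single a))
  /-- ss↓ : premise `B[A]_S`, conclusion `B ⅋ A`, for `A ≠ ∅` and `S ≠ ∅`. -/
  | ss (A B : LGraph) (S : Set B.V) :
      Nonempty A.V → S ≠ ∅ → GSRule (B.plug S A) (B.par A)
  /-- p↓ : premise `(M₁ ⅋ N₁) ⊗ ⋯ ⊗ (Mₙ ⅋ Nₙ)`, conclusion `P̄⟨M₁,…,Mₙ⟩ ⅋ P⟨N₁,…,Nₙ⟩`,
  for `P` prime with `n = |V(P)| ≥ 4` and all `Mᵢ ≠ ∅`. -/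
  | p (n : ℕ) (P : LGraph) (e : P.V ≃ Fin n) (M N : Fin n → LGraph) :
      P.Prime → 4 ≤ n → (∀ i, Nonempty (M i).V) →
      GSRule (bigTensor n fun i => (M i).par (N i))
        ((P.dual.comp fun v => M (e v)).par (P.comp fun v => N (e v)))

/-- The "up" rules ai↑, ss↑, p↑ (premise, conclusion). -/
inductive UpRule : LGraph → LGraph → Prop
  /-- ai↑ : premise `a ⊗ ā`, conclusion `∅`. -/
  | ai (a : Atom) : UpRule ((single a).tensor (single (dualAtom a))) LGraph.empty
  /-- ss↑ : premise `B ⊗ A`, conclusion `B[A]_S`, for `A ≠ ∅` and `S ≠ V(B)`. -/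
  | ss (A B : LGraph) (S : Set B.V) :
      Nonempty A.V → S ≠ Set.univ → UpRule (B.tensor A) (B.plug S A)
  /-- p↑ : premise `P⟨M₁,…,Mₙ⟩ ⊗ P̄⟨N₁,…,Nₙ⟩`, conclusion `(M₁ ⊗ N₁) ⅋ ⋯ ⅋ (Mₙ ⊗ Nₙ)`,
  for `P` prime with `n = |V(P)| ≥ 4` and all `Mᵢ ≠ ∅`. -/
  | p (n : ℕ) (P : LGraph) (e : P.V ≃ Fin n) (M N : Fin n → LGraph) :
      P.Prime → 4 ≤ n → (∀ i, Nonempty (M i).V) →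
      UpRule ((P.comp fun v => M (e v)).tensor (P.dual.comp fun v => N (e v)))
        (bigPar n fun i => (M i).tensor (N i))

/-- The rules of system SGS : the rules of GS together with their duals. -/
def SGSRule (G H : LGraph) : Prop := GSRule G H ∨ UpRule G H

/-- A single inference step in a system: inside some context, replace a module
isomorphic to the premise of a rule by the corresponding conclusion. -/
def Step (Rules : LGraph → LGraph → Prop) (G H : LGraph) : Prop :=
  ∃ (C : LGraph) (R : Set C.V) (p c : LGraph),
    Rules p c ∧ G.iso (C.plug R p) ∧ H.iso (C.plug R c)

/-- A derivation in a system from `G` to `H` : a finite sequence of inference steps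
and isomorphisms leading from `G` to `H`. -/
def Deriv (Rules : LGraph → LGraph → Prop) (G H : LGraph) : Prop :=
  Relation.ReflTransGen (fun X Y => X.iso Y ∨ Step Rules X Y) G H

/-- A graph is provable in a system if there is a derivation from `∅` to it. -/
def Provable (Rules : LGraph → LGraph → Prop) (G : LGraph) : Prop :=
  Deriv Rules LGraph.empty G

/-- Formulas: unit, positive and negative atoms, par and tensor. -/
inductive Formula where
  | unit : Formula
  | pos (a : ℕ) : Formula
  | neg (a : ℕ) : Formula
  | par (φ ψ : Formula) : Formula
  | tens (φ ψ : Formula) : Formula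

/-- The graph `[φ]` of a formula `φ`. -/
def Formula.graph : Formula → LGraph
  | .unit => LGraph.empty
  | .pos a => single (a, true)
  | .neg a => single (a, false)
  | .par φ ψ => φ.graph.par ψ.graph
  | .tens φ ψ => φ.graph.tensor ψ.graph

/-- Structural equivalence of formulas: the smallest congruence making `⅋` and `⊗`
associative and commutative with unit `∘`. -/
inductive Formula.equiv : Formula → Formula → Prop
  | refl (φ) : Formula.equiv φ φ
  | symm {φ ψ} : Formula.equiv φ ψ → Formula.equiv ψ φ
  | trans {φ ψ χ} : Formula.equiv φ ψ → Formula.equiv ψ χ → Formula.equiv φ χ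
  | parComm (φ ψ) : Formula.equiv (.par φ ψ) (.par ψ φ)
  | parAssoc (φ ψ χ) : Formula.equiv (.par φ (.par ψ χ)) (.par (.par φ ψ) χ)
  | parUnit (φ) : Formula.equiv (.par φ .unit) φ
  | tensComm (φ ψ) : Formula.equiv (.tens φ ψ) (.tens ψ φ)
  | tensAssoc (φ ψ χ) : Formula.equiv (.tens φ (.tens ψ χ)) (.tens (.tens φ ψ) χ)
  | tensUnit (φ) : Formula.equiv (.tens φ .unit) φ
  | parCongr {φ φ' ψ ψ'} : Formula.equiv φ φ' → Formula.equiv ψ ψ' →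
      Formula.equiv (.par φ ψ) (.par φ' ψ')
  | tensCongr {φ φ' ψ ψ'} : Formula.equiv φ φ' → Formula.equiv ψ ψ' →
      Formula.equiv (.tens φ ψ) (.tens φ' ψ')

/-- A formula is unit-free if it contains no occurrence of the unit `∘`. -/
def Formula.UnitFree : Formula → Prop
  | .unit => False
  | .pos _ => True
  | .neg _ => True
  | .par φ ψ => φ.UnitFree ∧ ψ.UnitFree
  | .tens φ ψ => φ.UnitFree ∧ ψ.UnitFree

/-- The sequent calculus MLL° (multiplicative linear logic with mix) on multisets
of formulas. -/
inductive MLL : Multiset Formula → Prop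
  | ax (a : ℕ) : MLL {Formula.pos a, Formula.neg a}
  | tens {Γ Δ : Multiset Formula} (φ ψ : Formula) :
      MLL (φ ::ₘ Γ) → MLL (ψ ::ₘ Δ) → MLL (Formula.tens φ ψ ::ₘ (Γ + Δ))
  | par {Γ : Multiset Formula} (φ ψ : Formula) :
      MLL (φ ::ₘ ψ ::ₘ Γ) → MLL (Formula.par φ ψ ::ₘ Γ)
  | mix {Γ Δ : Multiset Formula} : MLL Γ → MLL Δ → MLL (Γ + Δ)

namespace LGraph

section Iso

variable {G H K : LGraph}

def Iso.refl (G : LGraph) : Iso G G := ⟨Equiv.refl _, fun _ _ => Iff.rfl, fun _ => rfl⟩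

def Iso.symm (e : Iso G H) : Iso H G where
  toEquiv := e.toEquiv.symm
  adj_iff v w := by simp [e.adj_iff]
  label_eq v := by simpa using (e.label_eq (e.toEquiv.symm v)).symm

def Iso.trans (e : Iso G H) (f : Iso H K) : Iso G K where
  toEquiv := e.toEquiv.trans f.toEquiv
  adj_iff v w := (e.adj_iff v w).trans (f.adj_iff _ _)
  label_eq v := (f.label_eq _).trans (e.label_eq v)

def Iso.ofIsEmpty (G H : LGraph) [IsEmpty G.V] [IsEmpty H.V] : Iso G H where
  toEquiv := Equiv.equivOfIsEmpty _ _
  adj_iff v := isEmptyElim v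
  label_eq v := isEmptyElim v

end Iso

instance : IsEmpty empty.V := inferInstanceAs (IsEmpty Empty)

section Plug

variable (C : LGraph) (R : Set C.V)

def plugCongr {X Y : LGraph} (e : Iso X Y) : Iso (C.plug R X) (C.plug R Y) where
  toEquiv := Equiv.sumCongr (Equiv.refl C.V) e.toEquiv
  adj_iff v w := by
    rcases v with v | v <;> rcases w with w | w
    exacts [Iff.rfl, Iff.rfl, Iff.rfl, e.adj_iff v w]
  label_eq v := by
    rcases v with v | v
    exacts [rfl, e.label_eq v]

def plugPlug (C' : LGraph) (R' : Set C'.V) (X : LGraph) :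
    Iso (C.plug R (C'.plug R' X))
      ((C.plug R C').plug {z | Sum.elim (· ∈ R) (· ∈ R') z} X) where
  toEquiv := (Equiv.sumAssoc C.V C'.V X.V).symm
  adj_iff v w := by
    rcases v with v | v | v <;> rcases w with w | w | w <;> exact Iff.rfl
  label_eq v := by rcases v with v | v | v <;> rfl

def plugEmpty : Iso (C.plug R empty) C where
  toEquiv := Equiv.sumEmpty C.V empty.V
  adj_iff v w := by
    rcases v with v | v <;> rcases w with w | w
    exacts [Iff.rfl, w.elim, v.elim, v.elim]
  label_eq v := by
    rcases v with v | v
    exacts [rfl, v.elim]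

def plugUniv (X : LGraph) : Iso (C.plug Set.univ X) (C.tensor X) where
  toEquiv := Equiv.refl _
  adj_iff v w := by
    rcases v with v | v <;> rcases w with w | w
    exacts [Iff.rfl, iff_of_true trivial trivial, iff_of_true trivial trivial, Iff.rfl]
  label_eq v := by rcases v with v | v <;> rfl

end Plug

noncomputable def induce (G : LGraph) (S : Set G.V) : LGraph where
  V := S
  fintype := Fintype.ofFinite S
  adj v w := G.adj v w
  symm h := G.symm h
  irrefl v := G.irrefl v
  label v := G.label v

def Iso.induce {G H : LGraph} (e : Iso G H) (S : Set H.V) :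
    Iso (G.induce (e.toEquiv ⁻¹' S)) (H.induce S) where
  toEquiv := e.toEquiv.subtypeEquiv fun _ => Iff.rfl
  adj_iff v w := e.adj_iff v.1 w.1
  label_eq v := e.label_eq v.1

section InducePlug

variable (C : LGraph) (R : Set C.V) (X : LGraph) (S : Set (C.plug R X).V)

def inducePlugOfHoleIn (hS : ∀ x, Sum.inr x ∈ S) :
    Iso ((C.induce (Sum.inl ⁻¹' S)).plug (Subtype.val ⁻¹' R) X) ((C.plug R X).induce S) where
  toEquiv := (Equiv.sumCongr (Equiv.refl _) (Equiv.subtypeUnivEquiv hS).symm).trans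
    Equiv.subtypeSum.symm
  adj_iff v w := by
    rcases v with v | v <;> rcases w with w | w <;> exact Iff.rfl
  label_eq v := by rcases v with v | v <;> rfl

def inducePlugOfHoleOut (hS : ∀ x, Sum.inr x ∉ S) :
    Iso (C.induce (Sum.inl ⁻¹' S)) ((C.plug R X).induce S) where
  toEquiv := (@Equiv.sumEmpty _ {x // Sum.inr x ∈ S} ⟨fun x => hS x.1 x.2⟩).symm.trans
    Equiv.subtypeSum.symm
  adj_iff _ _ := Iff.rfl
  label_eq _ := rfl

end InducePlug

def induceRangeInl (A B : LGraph) : Iso A ((A.tensor B).induce (Set.range Sum.inl)) where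
  toEquiv := (Equiv.Set.rangeInl A.V B.V).symm
  adj_iff _ _ := Iff.rfl
  label_eq _ := rfl

def induceRangeInr (A B : LGraph) : Iso B ((A.tensor B).induce (Set.range Sum.inr)) where
  toEquiv := (Equiv.Set.rangeInr A.V B.V).symm
  adj_iff _ _ := Iff.rfl
  label_eq _ := rfl

/-- `G` is the join (tensor) of its subgraphs induced on `S` and on `Sᶜ`. -/
def IsJoinSplit (G : LGraph) (S : Set G.V) : Prop :=
  ∀ v ∈ S, ∀ w ∉ S, G.adj v w

/-- The complement of `G` is connected, i.e. `G` is not the join of two nonempty graphs. -/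
def Coconnected (G : LGraph) : Prop :=
  ∀ S, G.IsJoinSplit S → S = ∅ ∨ S = Set.univ

section IsJoinSplit

variable {G H : LGraph} {S : Set H.V}

theorem IsJoinSplit.mem_iff_of_not_adj (hS : H.IsJoinSplit S) {v w : H.V}
    (h : ¬ H.adj v w) : v ∈ S ↔ w ∈ S :=
  ⟨fun hv => by_contra fun hw => h (hS v hv w hw),
    fun hw => by_contra fun hv => h (H.symm (hS w hw v hv))⟩

theorem IsJoinSplit.preimage (hS : H.IsJoinSplit S) (e : Iso G H) :
    G.IsJoinSplit (e.toEquiv ⁻¹' S) :=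
  fun v hv w hw => (e.adj_iff v w).2 (hS _ hv _ hw)

variable {C : LGraph} {R : Set C.V} {X : LGraph} {S : Set (C.plug R X).V}

theorem IsJoinSplit.inr_preimage (hS : (C.plug R X).IsJoinSplit S) :
    X.IsJoinSplit (Sum.inr ⁻¹' S) :=
  fun _ hv _ hw => hS _ hv _ hw

theorem IsJoinSplit.plug_preimage (hS : (C.plug R X).IsJoinSplit S) (x₀ : X.V) (Y : LGraph) :
    (C.plug R Y).IsJoinSplit (Sum.map id (fun _ => x₀) ⁻¹' S) := by
  rintro (u | y) hv (u' | y') hw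
  exacts [hS _ hv _ hw, hS _ hv (.inr x₀) hw, hS (.inr x₀) hv _ hw, absurd hv hw]

end IsJoinSplit

theorem isJoinSplit_range_inl (A B : LGraph) :
    (A.tensor B).IsJoinSplit (Set.range Sum.inl) := by
  rintro _ ⟨a, rfl⟩ (a' | b) hw
  exacts [absurd ⟨a', rfl⟩ hw, trivial]

theorem isJoinSplit_range_inr (A B : LGraph) :
    (A.tensor B).IsJoinSplit (Set.range Sum.inr) := by
  rintro _ ⟨b, rfl⟩ (a | b') hw
  exacts [trivial, absurd ⟨b', rfl⟩ hw]

theorem _root_.Set.eq_empty_or_univ_of_forall_mem_iff {α : Type*} {S : Set α} (v₀ : α)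
    (h : ∀ v, v ∈ S ↔ v₀ ∈ S) : S = ∅ ∨ S = Set.univ := by
  by_cases h₀ : v₀ ∈ S
  · exact Or.inr (Set.eq_univ_of_forall fun v => (h v).2 h₀)
  · exact Or.inl (Set.eq_empty_of_forall_notMem fun v hv => h₀ ((h v).1 hv))

theorem coconnected_par {A B : LGraph} (hA : Nonempty A.V) (hB : Nonempty B.V) :
    (A.par B).Coconnected := by
  intro S hS
  obtain ⟨a₀⟩ := hA
  obtain ⟨b₀⟩ := hB
  have hinr : ∀ b, Sum.inr b ∈ S ↔ Sum.inl a₀ ∈ S := fun b => hS.mem_iff_of_not_adj id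
  refine Set.eq_empty_or_univ_of_forall_mem_iff (Sum.inl a₀) ?_
  rintro (a | b)
  exacts [(hS.mem_iff_of_not_adj (w := .inr b₀) id).trans (hinr b₀), hinr b]

theorem Coconnected.par {A : LGraph} (hA : A.Coconnected) (hne : Nonempty A.V) (B : LGraph) :
    (A.par B).Coconnected := by
  intro S hS
  obtain ⟨a₀⟩ := hne
  have hinl : ∀ a, Sum.inl a ∈ S ↔ Sum.inl a₀ ∈ S := by
    rcases hA (Sum.inl ⁻¹' S) (fun v hv w hw => hS _ hv _ hw) with h | h
    · exact fun a => iff_of_false (h.subset ·) (h.subset ·)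
    · exact fun a => iff_of_true (h.symm.subset trivial) (h.symm.subset trivial)
  refine Set.eq_empty_or_univ_of_forall_mem_iff (Sum.inl a₀) ?_
  rintro (a | b)
  exacts [hinl a, hS.mem_iff_of_not_adj id]

theorem Prime.eq_empty_or_univ_of_forall_not_adj {P : LGraph} (hP : P.Prime)
    (h3 : 3 ≤ Fintype.card P.V) {S : Set P.V} (hS : ∀ v ∈ S, ∀ w ∉ S, ¬ P.adj v w) :
    S = ∅ ∨ S = Set.univ := by
  have hmod : P.IsModule S := fun u hu x hx y hy =>
    iff_of_false (fun h => hS x hx u hu (P.symm h)) (fun h => hS y hy u hu (P.symm h))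
  have hmod' : P.IsModule Sᶜ := fun u hu x hx y hy =>
    iff_of_false (hS u (not_not.1 hu) x hx) (hS u (not_not.1 hu) y hy)
  rcases hP.2 S hmod with h | ⟨v, hv⟩ | h
  · exact Or.inl h
  · rcases hP.2 Sᶜ hmod' with h' | ⟨w, hw⟩ | h'
    · exact Or.inr (Set.compl_empty_iff.1 h')
    · exfalso
      have hvw : ∀ x, x = v ∨ x = w := fun x => by
        by_cases hx : x ∈ S
        · exact Or.inl (by simpa [hv] using hx)
        · exact Or.inr (by simpa [hw] using (show x ∈ Sᶜ from hx))
      obtain ⟨a, b, c, hab, hac, hbc⟩ := Fintype.two_lt_card_iff.1 h3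
      rcases hvw a with rfl | rfl <;> rcases hvw b with rfl | rfl <;>
        rcases hvw c with rfl | rfl <;> simp_all
    · exact Or.inl (Set.compl_univ_iff.1 h')
  · exact Or.inr h

theorem comp_adj_iff_of_fst_ne {G : LGraph} {H : G.V → LGraph} {x y : (G.comp H).V}
    (h : x.1 ≠ y.1) : (G.comp H).adj x y ↔ G.adj x.1 y.1 := by
  refine ⟨?_, fun hxy => Or.inr ⟨h, hxy⟩⟩
  rintro (⟨v, a, b, rfl, rfl, -⟩ | ⟨-, hxy⟩)
  exacts [absurd rfl h, hxy]

theorem coconnected_dual_comp {P : LGraph} (hP : P.Prime) (h3 : 3 ≤ Fintype.card P.V)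
    {M : P.V → LGraph} (hM : ∀ v, Nonempty (M v).V) : (P.dual.comp M).Coconnected := by
  intro S hS
  set T : Set P.V := {v | ∃ a, ⟨v, a⟩ ∈ S}
  set F : Set P.V := {v | ∃ a, ⟨v, a⟩ ∉ S}
  have hTF : ∀ v ∈ T, ∀ w ∈ F, v ≠ w → ¬ P.adj v w := by
    rintro v ⟨a, ha⟩ w ⟨b, hb⟩ hvw
    have hadj := hS _ ha _ hb
    exact ((comp_adj_iff_of_fst_ne (G := P.dual) (x := ⟨v, a⟩) (y := ⟨w, b⟩) hvw).1 hadj).2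
  have hF_of : ∀ v ∉ T, v ∈ F := fun v hv => (hM v).elim fun a => ⟨a, fun h => hv ⟨a, h⟩⟩
  have hT_of : ∀ v ∉ F, v ∈ T := fun v hv =>
    (hM v).elim fun a => ⟨a, by_contra fun h => hv ⟨a, h⟩⟩
  rcases hP.eq_empty_or_univ_of_forall_not_adj h3 fun v hv w hw =>
      hTF v hv w (hF_of w hw) (ne_of_mem_of_not_mem hv hw) with hT | hT
  · exact Or.inl (Set.eq_empty_of_forall_notMem fun x hx => hT.subset ⟨x.2, hx⟩)
  rcases hP.eq_empty_or_univ_of_forall_not_adj h3 fun v hv w hw h =>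
      hTF w (hT_of w hw) v hv (ne_of_mem_of_not_mem hv hw).symm (P.symm h) with hF | hF
  · exact Or.inr (Set.eq_univ_of_forall fun x => by_contra fun hx => hF.subset ⟨x.2, hx⟩)
  -- `T = F = univ`, so every vertex of `P` is isolated
  exfalso
  obtain ⟨v₀⟩ : Nonempty P.V := Fintype.card_pos_iff.1 (by omega)
  obtain ⟨w, hw⟩ := Fintype.exists_ne_of_one_lt_card (by omega) v₀
  rcases hP.eq_empty_or_univ_of_forall_not_adj h3 (S := {v₀}) fun v hv u hu =>
      hTF v (hT ▸ trivial) u (hF ▸ trivial) (ne_of_mem_of_not_mem hv hu) with h | h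
  · exact Set.singleton_ne_empty v₀ h
  · exact hw (h.symm.subset (Set.mem_univ w))

end LGraph

section Derivations

variable {Rules : LGraph → LGraph → Prop}

theorem Deriv.of_iso {G H H' : LGraph} (h : Deriv Rules G H) (e : Iso H H') :
    Deriv Rules G H' :=
  h.tail (Or.inl ⟨e⟩)

theorem Deriv.of_iso_left {G G' H : LGraph} (e : Iso G' G) (h : Deriv Rules G H) :
    Deriv Rules G' H :=
  h.head (Or.inl ⟨e⟩)

theorem Provable.of_iso {G H : LGraph} (h : Provable Rules G) (e : Iso G H) :
    Provable Rules H :=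
  Deriv.of_iso h e

theorem provable_of_isEmpty (G : LGraph) [IsEmpty G.V] : Provable Rules G :=
  .single (Or.inl ⟨Iso.ofIsEmpty _ _⟩)

theorem Step.plug {G H : LGraph} (h : Step Rules G H) (C : LGraph) (R : Set C.V) :
    Step Rules (C.plug R G) (C.plug R H) := by
  obtain ⟨C', R', p, c, hr, ⟨eG⟩, ⟨eH⟩⟩ := h
  exact ⟨C.plug R C', _, p, c, hr, ⟨(C.plugCongr R eG).trans (C.plugPlug R C' R' p)⟩,
    ⟨(C.plugCongr R eH).trans (C.plugPlug R C' R' c)⟩⟩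

theorem Deriv.plug {G H : LGraph} (h : Deriv Rules G H) (C : LGraph) (R : Set C.V) :
    Deriv Rules (C.plug R G) (C.plug R H) := by
  induction h with
  | refl => exact .refl
  | tail _ hstep ih =>
    rcases hstep with hiso | hstep
    · exact hiso.elim fun e => ih.of_iso (C.plugCongr R e)
    · exact ih.tail (Or.inr (hstep.plug C R))

theorem Provable.tensor {A B : LGraph} (hA : Provable Rules A) (hB : Provable Rules B) :
    Provable Rules (A.tensor B) :=
  hA.trans <| Deriv.of_iso_left (A.plugEmpty Set.univ).symm <|
    (hB.plug A Set.univ).of_iso (A.plugUniv B)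

def JoinFactorsProvable (Rules : LGraph → LGraph → Prop) (G : LGraph) : Prop :=
  ∀ S, G.IsJoinSplit S → Provable Rules (G.induce S)

theorem JoinFactorsProvable.of_iso {G H : LGraph} (h : JoinFactorsProvable Rules G)
    (e : Iso G H) : JoinFactorsProvable Rules H :=
  fun S hS => (h _ (hS.preimage e)).of_iso (e.induce S)

/-- Since `c` is coconnected, a join split of `C[c]_R` keeps the hole `c` on one side; the
corresponding split of `C[p]_R` then has the same factors up to the step `p ⟶ c`. -/
theorem JoinFactorsProvable.plug_of_rule {C : LGraph} {R : Set C.V} {p c : LGraph}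
    (hr : Rules p c) (hc : Nonempty c.V) (hcc : c.Coconnected)
    (h : JoinFactorsProvable Rules (C.plug R p)) : JoinFactorsProvable Rules (C.plug R c) := by
  intro S hS
  obtain ⟨x₀⟩ := hc
  have hp := h _ (hS.plug_preimage x₀ p)
  rcases hcc _ hS.inr_preimage with hout | hin
  · have hout : ∀ x, Sum.inr x ∉ S := Set.eq_empty_iff_forall_notMem.1 hout
    exact (hp.of_iso (inducePlugOfHoleOut C R p _ fun _ => hout x₀).symm).of_iso
      (inducePlugOfHoleOut C R c S hout)
  · have hin : ∀ x, Sum.inr x ∈ S := Set.eq_univ_iff_forall.1 hin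
    exact Deriv.of_iso ((hp.of_iso (inducePlugOfHoleIn C R p _ fun _ => hin x₀).symm).tail
      (Or.inr ⟨_, _, p, c, hr, ⟨Iso.refl _⟩, ⟨Iso.refl _⟩⟩)) (inducePlugOfHoleIn C R c S hin)

theorem Provable.joinFactorsProvable
    (hRules : ∀ p c, Rules p c → Nonempty c.V ∧ c.Coconnected) {G : LGraph}
    (h : Provable Rules G) : JoinFactorsProvable Rules G := by
  induction h with
  | refl =>
    intro S _
    have : IsEmpty (empty.induce S).V := ⟨fun v => isEmptyElim v.1⟩
    exact provable_of_isEmpty _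
  | tail _ hstep ih =>
    rcases hstep with hiso | ⟨C, R, p, c, hr, ⟨eX⟩, ⟨eY⟩⟩
    · exact hiso.elim ih.of_iso
    · exact ((ih.of_iso eX).plug_of_rule hr (hRules p c hr).1 (hRules p c hr).2).of_iso eY.symm

end Derivations

theorem GSRule.nonempty_coconnected {p c : LGraph} (h : GSRule p c) :
    Nonempty c.V ∧ c.Coconnected := by
  cases h with
  | ai a => exact ⟨⟨.inl ()⟩, coconnected_par ⟨()⟩ ⟨()⟩⟩
  | ss A B S hA hS =>
    obtain ⟨b, -⟩ := Set.nonempty_iff_ne_empty.2 hS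
    exact ⟨⟨.inr hA.some⟩, coconnected_par ⟨b⟩ hA⟩
  | p n P e M N hP hn hM =>
    have h4 : 4 ≤ Fintype.card P.V := by rwa [Fintype.card_congr e, Fintype.card_fin]
    obtain ⟨v⟩ : Nonempty P.V := Fintype.card_pos_iff.1 (by omega)
    have hne : Nonempty (P.dual.comp fun v => M (e v)).V := ⟨⟨v, (hM (e v)).some⟩⟩
    exact ⟨hne.map .inl,
      (coconnected_dual_comp hP (by omega) fun v => hM (e v)).par hne _⟩

/-- For all graphs `A` and `B`, the graph `A ⊗ B` is provable in
GS if and only if `A` is provable in GS and `B` is provable in GS. -/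
theorem tensor_provable_iff (A B : LGraph) :
    Provable GSRule (A.tensor B) ↔ Provable GSRule A ∧ Provable GSRule B := by
  refine ⟨fun h => ?_, fun ⟨hA, hB⟩ => hA.tensor hB⟩
  have hfactors := h.joinFactorsProvable fun _ _ => GSRule.nonempty_coconnected
  exact ⟨(hfactors _ (isJoinSplit_range_inl A B)).of_iso (induceRangeInl A B).symm,
    (hfactors _ (isJoinSplit_range_inr A B)).of_iso (induceRangeInr A B).symm⟩

end GSP
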